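/- arXiv:2102.11166 — 6 statements merged into one kernel-verified Lean document; each statement's English description precedes it below -/
import Mathlib

section
/- The axiom RSP1 is sound for ready simulation equivalence: for all actions a, b and processes x, y, u, z, w, v, the process (a.x + a.y + u) ‖ (b.z + b.w + v) is ready simulation equivalent to (a.x + u) ‖ (b.z + b.w + v) + (a.y + u) ‖ (b.z + b.w + v) + (a.x + a.y + u) ‖ (b.z + v) + (a.x + a.y + u) ‖ (b.w + v). -/
inductive Proc (A : Type) : Type where
  | nil : Proc A
  | pre : A → Proc A → Proc A
  | add : Proc A → Proc A → Proc A
  | par : Proc A → Proc A → Proc A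

inductive Step {A : Type} : Proc A → A → Proc A → Prop where
  | pre (a : A) (p : Proc A) : Step (.pre a p) a p
  | addL {p : Proc A} {a : A} {p' : Proc A} (q : Proc A) :
      Step p a p' → Step (.add p q) a p'
  | addR {q : Proc A} {a : A} {q' : Proc A} (p : Proc A) :
      Step q a q' → Step (.add p q) a q'
  | parL {p : Proc A} {a : A} {p' : Proc A} (q : Proc A) :
      Step p a p' → Step (.par p q) a (.par p' q)
  | parR {q : Proc A} {a : A} {q' : Proc A} (p : Proc A) :
      Step q a q' → Step (.par p q) a (.par p q')

inductive TraceTo {A : Type} : Proc A → List A → Proc A → Prop where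
  | refl (p : Proc A) : TraceTo p [] p
  | step {p : Proc A} {a : A} {p' : Proc A} {α : List A} {q : Proc A} :
      Step p a p' → TraceTo p' α q → TraceTo p (a :: α) q

def traces {A : Type} (p : Proc A) : Set (List A) := {α | ∃ q, TraceTo p α q}

def stuck {A : Type} (p : Proc A) : Prop := ∀ (a : A) (q : Proc A), ¬ Step p a q

def ctraces {A : Type} (p : Proc A) : Set (List A) :=
  {α | ∃ q, TraceTo p α q ∧ stuck q}

def initials {A : Type} (p : Proc A) : Set A := {a | ∃ p', Step p a p'}

def IsSimulation {A : Type} (R : Proc A → Proc A → Prop) : Prop :=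
  ∀ p q, R p q → ∀ (a : A) (p' : Proc A), Step p a p' → ∃ q', Step q a q' ∧ R p' q'

def SimEquiv {A : Type} (p q : Proc A) : Prop :=
  (∃ R, IsSimulation R ∧ R p q) ∧ (∃ R, IsSimulation R ∧ R q p)

def IsReadySimulation {A : Type} (R : Proc A → Proc A → Prop) : Prop :=
  IsSimulation R ∧ ∀ p q, R p q → initials p = initials q

def RSEquiv {A : Type} (p q : Proc A) : Prop :=
  (∃ R, IsReadySimulation R ∧ R p q) ∧ (∃ R, IsReadySimulation R ∧ R q p)

def IsCompletedSimulation {A : Type} (R : Proc A → Proc A → Prop) : Prop :=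
  IsSimulation R ∧ ∀ p q, R p q → stuck p → stuck q

def CSEquiv {A : Type} (p q : Proc A) : Prop :=
  (∃ R, IsCompletedSimulation R ∧ R p q) ∧ (∃ R, IsCompletedSimulation R ∧ R q p)

def Bisim {A : Type} (p q : Proc A) : Prop :=
  ∃ R, (∀ x y, R x y → R y x) ∧ IsSimulation R ∧ R p q

noncomputable def depth {A : Type} (p : Proc A) : ℕ :=
  sSup (List.length '' ctraces p)

noncomputable def norm {A : Type} (p : Proc A) : ℕ :=
  sInf (List.length '' ctraces p)

/-! Each summand of the right-hand side is ready-simulated by the left-hand side: dropping one of the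
two `a`-summands of `a.x + a.y + u` removes transitions but no initials, ready simulation is a
precongruence for `‖`, and `p + q` is ready-simulated by every process that ready-simulates both
`p` and `q`. Conversely, every transition of the left-hand side is a transition of the right-hand
side (an `a`-move of the left component uses `a.x` or `a.y`, a `b`-move of the right one uses `b.z`
or `b.w`), and both sides have the same initials. -/

namespace Step

variable {A : Type}

theorem pre_iff {a b : A} {p r : Proc A} : Step (.pre a p) b r ↔ b = a ∧ r = p := by
  constructor
  · rintro ⟨⟩; exact ⟨rfl, rfl⟩
  · rintro ⟨rfl, rfl⟩; exact .pre _ _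

theorem add_iff {p q r : Proc A} {a : A} : Step (.add p q) a r ↔ Step p a r ∨ Step q a r := by
  constructor
  · intro h
    cases h with
    | addL _ h => exact .inl h
    | addR _ h => exact .inr h
  · rintro (h | h)
    · exact .addL q h
    · exact .addR p h

theorem par_iff {p q r : Proc A} {a : A} :
    Step (.par p q) a r ↔
      (∃ p', Step p a p' ∧ r = .par p' q) ∨ (∃ q', Step q a q' ∧ r = .par p q') := by
  constructor
  · intro h
    cases h with
    | parL _ h => exact .inl ⟨_, h, rfl⟩
    | parR _ h => exact .inr ⟨_, h, rfl⟩
  · rintro (⟨p', h, rfl⟩ | ⟨q', h, rfl⟩)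
    · exact .parL q h
    · exact .parR p h

end Step

section Initials

variable {A : Type}

@[simp]
theorem initials_pre (a : A) (p : Proc A) : initials (.pre a p) = {a} := by
  ext c
  simp [initials, Step.pre_iff]

@[simp]
theorem initials_add (p q : Proc A) : initials (.add p q) = initials p ∪ initials q := by
  ext c
  simp [initials, Step.add_iff, exists_or]

@[simp]
theorem initials_par (p q : Proc A) : initials (.par p q) = initials p ∪ initials q := by
  ext c
  simp [initials, Step.par_iff, exists_or]

end Initials

/-- `ReadySimPre p q`: `q` ready-simulates `p`. -/
def ReadySimPre {A : Type} (p q : Proc A) : Prop :=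
  ∃ R, IsReadySimulation R ∧ R p q

namespace ReadySimPre

variable {A : Type}

theorem isReadySimulation : IsReadySimulation (ReadySimPre (A := A)) := by
  refine ⟨?_, ?_⟩
  · rintro p q ⟨R, hR, hpq⟩ a p' hp
    obtain ⟨q', hq, hpq'⟩ := hR.1 p q hpq a p' hp
    exact ⟨q', hq, R, hR, hpq'⟩
  · rintro p q ⟨R, hR, hpq⟩
    exact hR.2 p q hpq

theorem initials_eq {p q : Proc A} (h : ReadySimPre p q) : initials p = initials q :=
  isReadySimulation.2 p q h

theorem exists_step {p q p' : Proc A} {a : A} (h : ReadySimPre p q) (hp : Step p a p') :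
    ∃ q', Step q a q' ∧ ReadySimPre p' q' :=
  isReadySimulation.1 p q h a p' hp

theorem refl (p : Proc A) : ReadySimPre p p :=
  ⟨Eq, ⟨fun _ _ h _ p' hp => ⟨p', h ▸ hp, rfl⟩, fun _ _ h => h ▸ rfl⟩, rfl⟩

theorem of_initials_eq_of_forall_step {p q : Proc A} (hinit : initials p = initials q)
    (hstep : ∀ a p', Step p a p' → ∃ q', Step q a q' ∧ ReadySimPre p' q') :
    ReadySimPre p q := by
  refine ⟨fun r s => (r = p ∧ s = q) ∨ ReadySimPre r s, ⟨?_, ?_⟩, .inl ⟨rfl, rfl⟩⟩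
  · rintro r s (⟨rfl, rfl⟩ | h) a r' hr
    · obtain ⟨s', hs, h'⟩ := hstep a r' hr
      exact ⟨s', hs, .inr h'⟩
    · obtain ⟨s', hs, h'⟩ := h.exists_step hr
      exact ⟨s', hs, .inr h'⟩
  · rintro r s (⟨rfl, rfl⟩ | h)
    · exact hinit
    · exact h.initials_eq

theorem of_step_subset {p q : Proc A} (hstep : ∀ a p', Step p a p' → Step q a p')
    (hinit : initials q ⊆ initials p) : ReadySimPre p q :=
  of_initials_eq_of_forall_step
    (hinit.antisymm' fun _ ⟨p', hp⟩ => ⟨p', hstep _ _ hp⟩)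
    fun a p' hp => ⟨p', hstep a p' hp, refl p'⟩

theorem add_left {p q r : Proc A} (hp : ReadySimPre p r) (hq : ReadySimPre q r) :
    ReadySimPre (.add p q) r := by
  refine of_initials_eq_of_forall_step ?_ fun a s hs => ?_
  · rw [initials_add, hp.initials_eq, hq.initials_eq, Set.union_self]
  · rcases Step.add_iff.1 hs with hs | hs
    · exact hp.exists_step hs
    · exact hq.exists_step hs

theorem par {p q p₂ q₂ : Proc A} (h : ReadySimPre p q) (h₂ : ReadySimPre p₂ q₂) :
    ReadySimPre (.par p p₂) (.par q q₂) := by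
  refine ⟨fun r s => ∃ p q p₂ q₂, ReadySimPre p q ∧ ReadySimPre p₂ q₂ ∧
      r = .par p p₂ ∧ s = .par q q₂, ⟨?_, ?_⟩, ⟨p, q, p₂, q₂, h, h₂, rfl, rfl⟩⟩
  · rintro _ _ ⟨p, q, p₂, q₂, h, h₂, rfl, rfl⟩ a r hr
    rcases Step.par_iff.1 hr with ⟨p', hp, rfl⟩ | ⟨p₂', hp, rfl⟩
    · obtain ⟨q', hq, h'⟩ := h.exists_step hp
      exact ⟨_, .parL q₂ hq, p', q', p₂, q₂, h', h₂, rfl, rfl⟩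
    · obtain ⟨q₂', hq, h₂'⟩ := h₂.exists_step hp
      exact ⟨_, .parR q hq, p, q, p₂', q₂', h, h₂', rfl, rfl⟩
  · rintro _ _ ⟨p, q, p₂, q₂, h, h₂, rfl, rfl⟩
    rw [initials_par, initials_par, h.initials_eq, h₂.initials_eq]

theorem add_right_of_step_subset {p q u : Proc A} (hstep : ∀ a p', Step p a p' → Step q a p')
    (hinit : initials q ⊆ initials p ∪ initials u) : ReadySimPre (.add p u) (.add q u) := by
  refine of_step_subset (fun a r hr => ?_) ?_
  · rcases Step.add_iff.1 hr with h | h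
    · exact .addL u (hstep a r h)
    · exact .addR q h
  · rw [initials_add, initials_add]
    exact Set.union_subset hinit Set.subset_union_right

end ReadySimPre

theorem RSP1_sound_general {A : Type}
    (a b : A) (x y u z w v : Proc A) :
    RSEquiv
      (Proc.par (Proc.add (Proc.add (Proc.pre a x) (Proc.pre a y)) u)
                (Proc.add (Proc.add (Proc.pre b z) (Proc.pre b w)) v))
      (Proc.add (Proc.add (Proc.add
        (Proc.par (Proc.add (Proc.pre a x) u)
                  (Proc.add (Proc.add (Proc.pre b z) (Proc.pre b w)) v))
        (Proc.par (Proc.add (Proc.pre a y) u)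
                  (Proc.add (Proc.add (Proc.pre b z) (Proc.pre b w)) v)))
        (Proc.par (Proc.add (Proc.add (Proc.pre a x) (Proc.pre a y)) u)
                  (Proc.add (Proc.pre b z) v)))
        (Proc.par (Proc.add (Proc.add (Proc.pre a x) (Proc.pre a y)) u)
                  (Proc.add (Proc.pre b w) v))) := by
  open ReadySimPre in
  constructor
  · refine of_step_subset (fun c r h => ?_) (by simp)
    simp only [Step.par_iff, Step.add_iff, Step.pre_iff] at h ⊢
    aesop
  · have hax : ReadySimPre (.add (.pre a x) u) (.add (.add (.pre a x) (.pre a y)) u) :=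
      add_right_of_step_subset (fun _ _ h => .addL _ h) (by simp)
    have hay : ReadySimPre (.add (.pre a y) u) (.add (.add (.pre a x) (.pre a y)) u) :=
      add_right_of_step_subset (fun _ _ h => .addR _ h) (by simp)
    have hbz : ReadySimPre (.add (.pre b z) v) (.add (.add (.pre b z) (.pre b w)) v) :=
      add_right_of_step_subset (fun _ _ h => .addL _ h) (by simp)
    have hbw : ReadySimPre (.add (.pre b w) v) (.add (.add (.pre b z) (.pre b w)) v) :=
      add_right_of_step_subset (fun _ _ h => .addR _ h) (by simp)
    exact add_left (add_left (add_left (hax.par (refl _)) (hay.par (refl _)))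
      ((refl _).par hbz)) ((refl _).par hbw)

theorem RSP1_sound {A : Type} [Fintype A] [Nonempty A]
    (a b : A) (x y u z w v : Proc A) :
    RSEquiv
      (Proc.par (Proc.add (Proc.add (Proc.pre a x) (Proc.pre a y)) u)
                (Proc.add (Proc.add (Proc.pre b z) (Proc.pre b w)) v))
      (Proc.add (Proc.add (Proc.add
        (Proc.par (Proc.add (Proc.pre a x) u)
                  (Proc.add (Proc.add (Proc.pre b z) (Proc.pre b w)) v))
        (Proc.par (Proc.add (Proc.pre a y) u)
                  (Proc.add (Proc.add (Proc.pre b z) (Proc.pre b w)) v)))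
        (Proc.par (Proc.add (Proc.add (Proc.pre a x) (Proc.pre a y)) u)
                  (Proc.add (Proc.pre b z) v)))
        (Proc.par (Proc.add (Proc.add (Proc.pre a x) (Proc.pre a y)) u)
                  (Proc.add (Proc.pre b w) v))) :=
  RSP1_sound_general a b x y u z w v
end

section
/- The axiom SP1 is sound for simulation equivalence: for all processes x, y, z, w, the process (x + y) ‖ (z + w) is simulation equivalent to x ‖ (z + w) + y ‖ (z + w) + (x + y) ‖ z + (x + y) ‖ w. -/
/-!
Every transition of `(x + y) ‖ (z + w)` is literally a transition of the right-hand side, so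
the left-hand side is simulated by it. Conversely, each summand on the right is simulated by
`(x + y) ‖ (z + w)`, because `p` and `q` are simulated by `p + q` and simulation is a
precongruence for `‖`; a sum is simulated by anything simulating both summands.
-/

def Sim {A : Type} (p q : Proc A) : Prop := ∃ R, IsSimulation R ∧ R p q

namespace Sim

variable {A : Type} {p q r : Proc A}

theorem isSimulation : IsSimulation (@Sim A) := by
  rintro p q ⟨R, hR, hpq⟩ a p' hstep
  obtain ⟨q', hq', hR'⟩ := hR p q hpq a p' hstep
  exact ⟨q', hq', R, hR, hR'⟩

theorem refl (p : Proc A) : Sim p p :=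
  ⟨Eq, by rintro p q rfl a p' h; exact ⟨p', h, rfl⟩, rfl⟩

theorem of_forall_step_sim (h : ∀ a p', Step p a p' → ∃ r', Step r a r' ∧ Sim p' r') :
    Sim p r := by
  refine ⟨fun u v => Sim u v ∨ (u = p ∧ v = r), ?_, Or.inr ⟨rfl, rfl⟩⟩
  rintro u v (huv | ⟨rfl, rfl⟩) a u' hstep
  · obtain ⟨v', hv', hsim⟩ := isSimulation u v huv a u' hstep
    exact ⟨v', hv', Or.inl hsim⟩
  · obtain ⟨v', hv', hsim⟩ := h a u' hstep
    exact ⟨v', hv', Or.inl hsim⟩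

theorem of_forall_step (h : ∀ a p', Step p a p' → Step q a p') : Sim p q :=
  of_forall_step_sim fun a p' hp => ⟨p', h a p' hp, refl p'⟩

theorem add_left (p q : Proc A) : Sim p (.add p q) :=
  of_forall_step fun _ _ => Step.addL q

theorem add_right (p q : Proc A) : Sim q (.add p q) :=
  of_forall_step fun _ _ => Step.addR p

theorem add (hp : Sim p r) (hq : Sim q r) : Sim (.add p q) r := by
  refine of_forall_step_sim fun a s hstep => ?_
  cases hstep with
  | addL _ h => exact isSimulation _ _ hp _ _ h
  | addR _ h => exact isSimulation _ _ hq _ _ h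

theorem par {p' q' : Proc A} (hp : Sim p p') (hq : Sim q q') :
    Sim (.par p q) (.par p' q') := by
  refine ⟨fun s t => ∃ u v u' v', s = .par u v ∧ t = .par u' v' ∧ Sim u u' ∧ Sim v v',
    ?_, p, q, p', q', rfl, rfl, hp, hq⟩
  rintro _ _ ⟨u, v, u', v', rfl, rfl, hu, hv⟩ a s hstep
  cases hstep with
  | parL _ h =>
    obtain ⟨t, ht, hsim⟩ := isSimulation _ _ hu _ _ h
    exact ⟨.par t v', Step.parL _ ht, _, _, _, _, rfl, rfl, hsim, hv⟩
  | parR _ h =>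
    obtain ⟨t, ht, hsim⟩ := isSimulation _ _ hv _ _ h
    exact ⟨.par u' t, Step.parR _ ht, _, _, _, _, rfl, rfl, hu, hsim⟩

end Sim

theorem SP1_sound_general {A : Type} (x y z w : Proc A) :
    SimEquiv
      (Proc.par (Proc.add x y) (Proc.add z w))
      (Proc.add (Proc.add (Proc.add
        (Proc.par x (Proc.add z w))
        (Proc.par y (Proc.add z w)))
        (Proc.par (Proc.add x y) z))
        (Proc.par (Proc.add x y) w)) := by
  refine ⟨Sim.of_forall_step fun a s hstep => ?_, ?_⟩
  · cases hstep with
    | parL _ hxy =>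
      cases hxy with
      | addL _ hx => exact .addL _ (.addL _ (.addL _ (.parL _ hx)))
      | addR _ hy => exact .addL _ (.addL _ (.addR _ (.parL _ hy)))
    | parR _ hzw =>
      cases hzw with
      | addL _ hz => exact .addL _ (.addR _ (.parR _ hz))
      | addR _ hw => exact .addR _ (.parR _ hw)
  · exact Sim.add (.add (.add
      (.par (.add_left x y) (.refl _))
      (.par (.add_right x y) (.refl _)))
      (.par (.refl _) (.add_left z w)))
      (.par (.refl _) (.add_right z w))

theorem SP1_sound {A : Type} [Fintype A] [Nonempty A] (x y z w : Proc A) :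
    SimEquiv
      (Proc.par (Proc.add x y) (Proc.add z w))
      (Proc.add (Proc.add (Proc.add
        (Proc.par x (Proc.add z w))
        (Proc.par y (Proc.add z w)))
        (Proc.par (Proc.add x y) z))
        (Proc.par (Proc.add x y) w)) :=
  SP1_sound_general x y z w
end

section
/- The axiom SP2 is sound for simulation equivalence: for every action a and processes x, y, z, the process a.x ‖ (y + z) is simulation equivalent to a.(x ‖ (y + z)) + a.x ‖ y + a.x ‖ z. -/
def Simulated {A : Type} (p q : Proc A) : Prop :=
  ∃ R, IsSimulation R ∧ R p q

namespace Simulated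

variable {A : Type} {a : A} {p q r u u' v v' : Proc A}

theorem step (h : Simulated p q) {p' : Proc A} (hp : Step p a p') :
    ∃ q', Step q a q' ∧ Simulated p' q' := by
  obtain ⟨R, hR, hpq⟩ := h
  obtain ⟨q', hq, hpq'⟩ := hR p q hpq a p' hp
  exact ⟨q', hq, R, hR, hpq'⟩

theorem refl (p : Proc A) : Simulated p p :=
  ⟨(· = ·), fun _ _ h _ p' hp => ⟨p', h ▸ hp, rfl⟩, rfl⟩

/-- Similarity is the greatest fixed point of the simulation condition: matching the first
steps of `p` up to similarity suffices. -/
theorem of_forall_step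
    (h : ∀ a p', Step p a p' → ∃ q', Step q a q' ∧ Simulated p' q') : Simulated p q := by
  refine ⟨fun s t => (s = p ∧ t = q) ∨ Simulated s t, ?_, .inl ⟨rfl, rfl⟩⟩
  rintro s t (⟨rfl, rfl⟩ | hst) b s' hs
  · obtain ⟨t', ht, hst'⟩ := h b s' hs
    exact ⟨t', ht, .inr hst'⟩
  · obtain ⟨t', ht, hst'⟩ := hst.step hs
    exact ⟨t', ht, .inr hst'⟩

theorem le_add_left (p q : Proc A) : Simulated p (.add p q) :=
  of_forall_step fun _ p' hp => ⟨p', .addL q hp, refl p'⟩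

theorem le_add_right (p q : Proc A) : Simulated q (.add p q) :=
  of_forall_step fun _ q' hq => ⟨q', .addR p hq, refl q'⟩

theorem add_le (hp : Simulated p r) (hq : Simulated q r) : Simulated (.add p q) r := by
  refine of_forall_step fun _ _ hs => ?_
  cases hs with
  | addL _ hs => exact hp.step hs
  | addR _ hs => exact hq.step hs

theorem par (hu : Simulated u u') (hv : Simulated v v') : Simulated (.par u v) (.par u' v') := by
  refine ⟨fun s t => ∃ u u' v v',
      Simulated u u' ∧ Simulated v v' ∧ s = .par u v ∧ t = .par u' v', ?_,
    u, u', v, v', hu, hv, rfl, rfl⟩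
  rintro _ _ ⟨u, u', v, v', hu, hv, rfl, rfl⟩ _ s hs
  cases hs with
  | parL _ hs =>
    obtain ⟨t, ht, hst⟩ := hu.step hs
    exact ⟨_, .parL v' ht, _, _, v, v', hst, hv, rfl, rfl⟩
  | parR _ hs =>
    obtain ⟨t, ht, hst⟩ := hv.step hs
    exact ⟨_, .parR u' ht, u, u', _, _, hu, hst, rfl, rfl⟩

theorem pre_par_le_par_pre (a : A) (x y : Proc A) :
    Simulated (.pre a (.par x y)) (.par (.pre a x) y) := by
  refine of_forall_step fun _ _ hs => ?_
  cases hs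
  exact ⟨_, .parL y (.pre a x), refl _⟩

end Simulated

theorem SP2_sound_general {A : Type} (a : A) (x y z : Proc A) :
    SimEquiv
      (Proc.par (Proc.pre a x) (Proc.add y z))
      (Proc.add (Proc.add
        (Proc.pre a (Proc.par x (Proc.add y z)))
        (Proc.par (Proc.pre a x) y))
        (Proc.par (Proc.pre a x) z)) := by
  constructor
  · refine Simulated.of_forall_step fun _ _ hs => ?_
    cases hs with
    | parL _ hs =>
      cases hs
      exact ⟨_, .addL _ (.addL _ (.pre a _)), Simulated.refl _⟩
    | parR _ hs =>
      cases hs with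
      | addL _ hs => exact ⟨_, .addL _ (.addR _ (.parR _ hs)), Simulated.refl _⟩
      | addR _ hs => exact ⟨_, .addR _ (.parR _ hs), Simulated.refl _⟩
  · exact Simulated.add_le
      (Simulated.add_le (.pre_par_le_par_pre a x _) ((Simulated.refl _).par (.le_add_left y z)))
      ((Simulated.refl _).par (.le_add_right y z))

theorem SP2_sound {A : Type} [Fintype A] [Nonempty A] (a : A) (x y z : Proc A) :
    SimEquiv
      (Proc.par (Proc.pre a x) (Proc.add y z))
      (Proc.add (Proc.add
        (Proc.pre a (Proc.par x (Proc.add y z)))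
        (Proc.par (Proc.pre a x) y))
        (Proc.par (Proc.pre a x) z)) :=
  SP2_sound_general a x y z
end

section
/- The axiom CSP2 is sound for completed simulation equivalence: for all actions a, b, c and processes x, y, z, w, the process a.x ‖ (b.y + c.z + w) is completed simulation equivalent to a.(x ‖ (b.y + c.z + w)) + a.x ‖ (b.y + w) + a.x ‖ (c.z + w). -/
/- Write `B = b.y + c.z + w`. Every transition of the left-hand side, and of the summand
`a.(x ‖ B)` of the right-hand side, is a transition to the very same process of the other side.
The other two summands lie below `a.x ‖ B` because completed simulation is a precongruence for
`‖`, and dropping a summand from a sum can only break completed simulation through stuckness,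
which the remaining prefix rules out. A sum lies below any process above both of its summands. -/

namespace Proc

variable {A : Type}

theorem Step.not_stuck {p p' : Proc A} {a : A} (h : Step p a p') : ¬ stuck p :=
  fun hp => hp a p' h

theorem stuck_add_iff {p q : Proc A} : stuck (add p q) ↔ stuck p ∧ stuck q :=
  ⟨fun h => ⟨fun a r hp => h a r (.addL q hp), fun a r hq => h a r (.addR p hq)⟩,
    fun ⟨hp, hq⟩ a r h => by
      cases h with
      | addL _ h => exact hp a r h
      | addR _ h => exact hq a r h⟩

theorem stuck_par_iff {p q : Proc A} : stuck (par p q) ↔ stuck p ∧ stuck q :=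
  ⟨fun h => ⟨fun a r hp => h a _ (.parL q hp), fun a r hq => h a _ (.parR p hq)⟩,
    fun ⟨hp, hq⟩ a r h => by
      cases h with
      | parL _ h => exact hp a _ h
      | parR _ h => exact hq a _ h⟩

end Proc

open Proc

def CSim {A : Type} (p q : Proc A) : Prop :=
  ∃ R, IsCompletedSimulation R ∧ R p q

namespace CSim

variable {A : Type} {p q r p' q' : Proc A}

theorem of_step_imp (hstep : ∀ a p', Step p a p' → Step q a p') (hstuck : stuck p → stuck q) :
    CSim p q := by
  refine ⟨fun s t => s = t ∨ s = p ∧ t = q, ⟨?_, ?_⟩, .inr ⟨rfl, rfl⟩⟩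
  · rintro s t (rfl | ⟨rfl, rfl⟩) a s' hs
    · exact ⟨s', hs, .inl rfl⟩
    · exact ⟨s', hstep a s' hs, .inl rfl⟩
  · rintro s t (rfl | ⟨rfl, rfl⟩) hs
    exacts [hs, hstuck hs]

theorem refl (p : Proc A) : CSim p p :=
  of_step_imp (fun _ _ h => h) id

theorem drop_middle_summand (hpq : stuck p → stuck q) :
    CSim (.add p r) (.add (.add p q) r) := by
  refine of_step_imp (fun _ _ h => ?_) (fun h => ?_)
  · cases h with
    | addL _ h => exact .addL r (.addL q h)
    | addR _ h => exact .addR _ h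
  · obtain ⟨hp, hr⟩ := stuck_add_iff.mp h
    exact stuck_add_iff.mpr ⟨stuck_add_iff.mpr ⟨hp, hpq hp⟩, hr⟩

theorem drop_first_summand (hqp : stuck q → stuck p) :
    CSim (.add q r) (.add (.add p q) r) := by
  refine of_step_imp (fun _ _ h => ?_) (fun h => ?_)
  · cases h with
    | addL _ h => exact .addL r (.addR p h)
    | addR _ h => exact .addR _ h
  · obtain ⟨hq, hr⟩ := stuck_add_iff.mp h
    exact stuck_add_iff.mpr ⟨stuck_add_iff.mpr ⟨hqp hq, hq⟩, hr⟩

theorem add (hp : CSim p r) (hq : CSim q r) : CSim (.add p q) r := by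
  obtain ⟨R, ⟨hRsim, hRstuck⟩, hR⟩ := hp
  obtain ⟨S, ⟨hSsim, hSstuck⟩, hS⟩ := hq
  refine ⟨fun s t => R s t ∨ S s t ∨ s = .add p q ∧ t = r, ⟨?_, ?_⟩, .inr (.inr ⟨rfl, rfl⟩)⟩
  · rintro s t (hst | hst | ⟨rfl, rfl⟩) a s' hs
    · obtain ⟨t', ht, ht'⟩ := hRsim s t hst a s' hs
      exact ⟨t', ht, .inl ht'⟩
    · obtain ⟨t', ht, ht'⟩ := hSsim s t hst a s' hs
      exact ⟨t', ht, .inr (.inl ht')⟩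
    · cases hs with
      | addL _ hs =>
        obtain ⟨t', ht, ht'⟩ := hRsim _ _ hR a s' hs
        exact ⟨t', ht, .inl ht'⟩
      | addR _ hs =>
        obtain ⟨t', ht, ht'⟩ := hSsim _ _ hS a s' hs
        exact ⟨t', ht, .inr (.inl ht')⟩
  · rintro s t (hst | hst | ⟨rfl, rfl⟩) hs
    · exact hRstuck s t hst hs
    · exact hSstuck s t hst hs
    · exact hRstuck _ _ hR (stuck_add_iff.mp hs).1

theorem par (hp : CSim p p') (hq : CSim q q') : CSim (.par p q) (.par p' q') := by
  obtain ⟨R, ⟨hRsim, hRstuck⟩, hR⟩ := hp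
  obtain ⟨S, ⟨hSsim, hSstuck⟩, hS⟩ := hq
  refine ⟨fun s t => ∃ u u' v v', s = .par u v ∧ t = .par u' v' ∧ R u u' ∧ S v v',
    ⟨?_, ?_⟩, ⟨p, p', q, q', rfl, rfl, hR, hS⟩⟩
  · rintro _ _ ⟨u, u', v, v', rfl, rfl, hu, hv⟩ a s' hs
    cases hs with
    | parL _ hs =>
      obtain ⟨t', ht, ht'⟩ := hRsim u u' hu a _ hs
      exact ⟨_, .parL v' ht, _, _, _, _, rfl, rfl, ht', hv⟩
    | parR _ hs =>
      obtain ⟨t', ht, ht'⟩ := hSsim v v' hv a _ hs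
      exact ⟨_, .parR u' ht, _, _, _, _, rfl, rfl, hu, ht'⟩
  · rintro _ _ ⟨u, u', v, v', rfl, rfl, hu, hv⟩ hs
    obtain ⟨hus, hvs⟩ := stuck_par_iff.mp hs
    exact stuck_par_iff.mpr ⟨hRstuck u u' hu hus, hSstuck v v' hv hvs⟩

end CSim

section CSP2

variable {A : Type} (a b c : A) (x y z w : Proc A)

theorem csp2_lhs_csim_rhs :
    CSim (.par (.pre a x) (.add (.add (.pre b y) (.pre c z)) w))
      (.add (.add (.pre a (.par x (.add (.add (.pre b y) (.pre c z)) w)))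
        (.par (.pre a x) (.add (.pre b y) w))) (.par (.pre a x) (.add (.pre c z) w))) := by
  refine CSim.of_step_imp (fun _ _ h => ?_) (absurd · (Step.parL _ (.pre a x)).not_stuck)
  cases h with
  | parL _ h =>
    cases h
    exact .addL _ (.addL _ (.pre _ _))
  | parR _ h =>
    cases h with
    | addL _ h =>
      cases h with
      | addL _ h => cases h; exact .addL _ (.addR _ (.parR _ (.addL _ (.pre _ _))))
      | addR _ h => cases h; exact .addR _ (.parR _ (.addL _ (.pre _ _)))
    | addR _ h => exact .addL _ (.addR _ (.parR _ (.addR _ h)))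

theorem csp2_rhs_csim_lhs :
    CSim (.add (.add (.pre a (.par x (.add (.add (.pre b y) (.pre c z)) w)))
        (.par (.pre a x) (.add (.pre b y) w))) (.par (.pre a x) (.add (.pre c z) w)))
      (.par (.pre a x) (.add (.add (.pre b y) (.pre c z)) w)) := by
  have prefix_summand : CSim (.pre a (.par x (.add (.add (.pre b y) (.pre c z)) w)))
      (.par (.pre a x) (.add (.add (.pre b y) (.pre c z)) w)) :=
    CSim.of_step_imp (fun _ _ h => by cases h; exact .parL _ (.pre a x))
      (absurd · (Step.pre _ _).not_stuck)
  have hb : ¬ stuck (.pre b y) := (Step.pre b y).not_stuck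
  have hc : ¬ stuck (.pre c z) := (Step.pre c z).not_stuck
  exact .add (.add prefix_summand (.par (.refl _) (.drop_middle_summand (absurd · hb))))
    (.par (.refl _) (.drop_first_summand (absurd · hc)))

end CSP2

theorem CSP2_sound_general {A : Type}
    (a b c : A) (x y z w : Proc A) :
    CSEquiv
      (Proc.par (Proc.pre a x)
                (Proc.add (Proc.add (Proc.pre b y) (Proc.pre c z)) w))
      (Proc.add (Proc.add
        (Proc.pre a (Proc.par x (Proc.add (Proc.add (Proc.pre b y) (Proc.pre c z)) w)))
        (Proc.par (Proc.pre a x) (Proc.add (Proc.pre b y) w)))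
        (Proc.par (Proc.pre a x) (Proc.add (Proc.pre c z) w))) :=
  ⟨csp2_lhs_csim_rhs a b c x y z w, csp2_rhs_csim_lhs a b c x y z w⟩

theorem CSP2_sound {A : Type} [Fintype A] [Nonempty A]
    (a b c : A) (x y z w : Proc A) :
    CSEquiv
      (Proc.par (Proc.pre a x)
                (Proc.add (Proc.add (Proc.pre b y) (Proc.pre c z)) w))
      (Proc.add (Proc.add
        (Proc.pre a (Proc.par x (Proc.add (Proc.add (Proc.pre b y) (Proc.pre c z)) w)))
        (Proc.par (Proc.pre a x) (Proc.add (Proc.pre b y) w)))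
        (Proc.par (Proc.pre a x) (Proc.add (Proc.pre c z) w))) :=
  CSP2_sound_general a b c x y z w
end

section
/- The full distributivity law TP: (x + y) ‖ z ≈ x ‖ z + y ‖ z is sound for trace equivalence: for all processes p, q, r, the set of traces of (p + q) ‖ r equals the set of traces of p ‖ r + q ‖ r. -/
/-! Induct on the trace. A first step of `(p + q) ‖ r` either moves the left component, where
a step of `p + q` is a step of `p` or of `q` and the choice is resolved, or moves `r`, after which
the induction hypothesis applies to the residual `(p + q) ‖ r'`. -/

namespace Proc

variable {A : Type}

theorem step_add_iff {p q p' : Proc A} {a : A} :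
    Step (.add p q) a p' ↔ Step p a p' ∨ Step q a p' := by
  constructor
  · rintro (_ | ⟨_, h⟩ | ⟨_, h⟩)
    exacts [Or.inl h, Or.inr h]
  · rintro (h | h)
    exacts [.addL q h, .addR p h]

theorem step_par_iff {p q s : Proc A} {a : A} :
    Step (.par p q) a s ↔
      (∃ p', Step p a p' ∧ .par p' q = s) ∨ (∃ q', Step q a q' ∧ .par p q' = s) := by
  constructor
  · rintro (_ | _ | _ | ⟨_, h⟩ | ⟨_, h⟩)
    exacts [Or.inl ⟨_, h, rfl⟩, Or.inr ⟨_, h, rfl⟩]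
  · rintro (⟨p', h, rfl⟩ | ⟨q', h, rfl⟩)
    exacts [.parL q h, .parR p h]

theorem nil_mem_traces (p : Proc A) : [] ∈ traces p := ⟨p, .refl p⟩

theorem cons_mem_traces {p : Proc A} {a : A} {α : List A} :
    a :: α ∈ traces p ↔ ∃ p', Step p a p' ∧ α ∈ traces p' := by
  constructor
  · rintro ⟨_, _ | ⟨h, ht⟩⟩
    exact ⟨_, h, _, ht⟩
  · rintro ⟨p', h, s, hs⟩
    exact ⟨s, .step h hs⟩

theorem cons_mem_traces_par {p q : Proc A} {a : A} {α : List A} :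
    a :: α ∈ traces (.par p q) ↔
      (∃ p', Step p a p' ∧ α ∈ traces (.par p' q)) ∨
        ∃ q', Step q a q' ∧ α ∈ traces (.par p q') := by
  simp only [cons_mem_traces, step_par_iff, or_and_right, exists_or, exists_exists_and_eq_and]

theorem traces_add (p q : Proc A) : traces (.add p q) = traces p ∪ traces q := by
  ext (_ | ⟨a, α⟩)
  · simp [nil_mem_traces]
  · simp only [Set.mem_union, cons_mem_traces, step_add_iff, or_and_right, exists_or]

theorem traces_par_add (p q r : Proc A) :
    traces (.par (.add p q) r) = traces (.par p r) ∪ traces (.par q r) := by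
  ext α
  induction α generalizing r with
  | nil => simp [nil_mem_traces]
  | cons a α ih =>
    simp only [Set.mem_union, cons_mem_traces_par, step_add_iff, ih, or_and_right,
      and_or_left, exists_or]
    exact or_or_or_comm

end Proc

theorem TP_sound_traces_general {A : Type} (p q r : Proc A) :
    traces (Proc.par (Proc.add p q) r)
      = traces (Proc.add (Proc.par p r) (Proc.par q r)) := by
  rw [Proc.traces_par_add, Proc.traces_add]

theorem TP_sound_traces {A : Type} [Fintype A] [Nonempty A] (p q r : Proc A) :
    traces (Proc.par (Proc.add p q) r)
      = traces (Proc.add (Proc.par p r) (Proc.par q r)) :=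
  TP_sound_traces_general p q r
end

section
/- For every pair of closed BCCSP terms p and q (terms without the parallel operator), there exists a closed BCCSP term r such that the equation p ‖ q ≈ r is derivable from the axiom system E_S consisting of: A0: x+0≈x, A1: x+y≈y+x, A2: (x+y)+z≈x+(y+z), A3: x+x≈x, P0: x‖0≈x, P1: x‖y≈y‖x, S: a(x+y)≈a(x+y)+ax, SP1: (x+y)‖(z+w)≈x‖(z+w)+y‖(z+w)+(x+y)‖z+(x+y)‖w, SP2: ax‖(y+z)≈a(x‖(y+z))+ax‖y+ax‖z, and EL1: ax‖by≈a(x‖by)+b(ax‖y) (all instances over actions a, b). -/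
/-- Open BCCSP_par terms with variables. -/
inductive Tm (A : Type) : Type where
  | nil : Tm A
  | var : ℕ → Tm A
  | pre : A → Tm A → Tm A
  | add : Tm A → Tm A → Tm A
  | par : Tm A → Tm A → Tm A

def tmSubst {A : Type} (σ : ℕ → Tm A) : Tm A → Tm A
  | .nil => .nil
  | .var n => σ n
  | .pre a t => .pre a (tmSubst σ t)
  | .add t u => .add (tmSubst σ t) (tmSubst σ u)
  | .par t u => .par (tmSubst σ t) (tmSubst σ u)

/-- Derivability in equational logic from an axiom system `E`. -/
inductive Deriv {A : Type} (E : Set (Tm A × Tm A)) : Tm A → Tm A → Prop where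
  | ax {t u : Tm A} : (t, u) ∈ E → Deriv E t u
  | refl (t : Tm A) : Deriv E t t
  | symm {t u : Tm A} : Deriv E t u → Deriv E u t
  | trans {t u v : Tm A} : Deriv E t u → Deriv E u v → Deriv E t v
  | subst {t u : Tm A} (σ : ℕ → Tm A) : Deriv E t u → Deriv E (tmSubst σ t) (tmSubst σ u)
  | pre {t u : Tm A} (a : A) : Deriv E t u → Deriv E (.pre a t) (.pre a u)
  | add {t t' u u' : Tm A} : Deriv E t t' → Deriv E u u' → Deriv E (.add t u) (.add t' u')
  | par {t t' u u' : Tm A} : Deriv E t t' → Deriv E u u' → Deriv E (.par t u) (.par t' u')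

def ClosedTm {A : Type} : Tm A → Prop
  | .nil => True
  | .var _ => False
  | .pre _ t => ClosedTm t
  | .add t u => ClosedTm t ∧ ClosedTm u
  | .par t u => ClosedTm t ∧ ClosedTm u

def ParFree {A : Type} : Tm A → Prop
  | .nil => True
  | .var _ => True
  | .pre _ t => ParFree t
  | .add t u => ParFree t ∧ ParFree u
  | .par _ _ => False

/-- The axiom system E_S = {A0, A1, A2, A3, P0, P1, S, SP1, SP2, EL1},
with action letters ranging over `A` and `var 0, var 1, var 2, var 3`
playing the role of the variables `x, y, z, w`. -/
def ES (A : Type) : Set (Tm A × Tm A) :=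
  {e |
    -- A0
    e = ((Tm.add (Tm.var 0) Tm.nil, Tm.var 0) : Tm A × Tm A) ∨
    -- A1
    e = (Tm.add (Tm.var 0) (Tm.var 1), Tm.add (Tm.var 1) (Tm.var 0)) ∨
    -- A2
    e = (Tm.add (Tm.add (Tm.var 0) (Tm.var 1)) (Tm.var 2),
         Tm.add (Tm.var 0) (Tm.add (Tm.var 1) (Tm.var 2))) ∨
    -- A3
    e = (Tm.add (Tm.var 0) (Tm.var 0), Tm.var 0) ∨
    -- P0
    e = (Tm.par (Tm.var 0) Tm.nil, Tm.var 0) ∨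
    -- P1
    e = (Tm.par (Tm.var 0) (Tm.var 1), Tm.par (Tm.var 1) (Tm.var 0)) ∨
    -- S
    (∃ a : A, e = (Tm.pre a (Tm.add (Tm.var 0) (Tm.var 1)),
        Tm.add (Tm.pre a (Tm.add (Tm.var 0) (Tm.var 1))) (Tm.pre a (Tm.var 0)))) ∨
    -- SP1
    e = (Tm.par (Tm.add (Tm.var 0) (Tm.var 1)) (Tm.add (Tm.var 2) (Tm.var 3)),
         Tm.add (Tm.add (Tm.add
           (Tm.par (Tm.var 0) (Tm.add (Tm.var 2) (Tm.var 3)))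
           (Tm.par (Tm.var 1) (Tm.add (Tm.var 2) (Tm.var 3))))
           (Tm.par (Tm.add (Tm.var 0) (Tm.var 1)) (Tm.var 2)))
           (Tm.par (Tm.add (Tm.var 0) (Tm.var 1)) (Tm.var 3))) ∨
    -- SP2
    (∃ a : A, e = (Tm.par (Tm.pre a (Tm.var 0)) (Tm.add (Tm.var 1) (Tm.var 2)),
         Tm.add (Tm.add
           (Tm.pre a (Tm.par (Tm.var 0) (Tm.add (Tm.var 1) (Tm.var 2))))
           (Tm.par (Tm.pre a (Tm.var 0)) (Tm.var 1)))
           (Tm.par (Tm.pre a (Tm.var 0)) (Tm.var 2)))) ∨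
    -- EL1
    (∃ a b : A, e = (Tm.par (Tm.pre a (Tm.var 0)) (Tm.pre b (Tm.var 1)),
         Tm.add (Tm.pre a (Tm.par (Tm.var 0) (Tm.pre b (Tm.var 1))))
                (Tm.pre b (Tm.par (Tm.pre a (Tm.var 0)) (Tm.var 1)))))}

/-! Each of EL1, SP2 and SP1 rewrites a parallel composition of closed BCCSP terms into a sum
of prefixed terms and parallel compositions of strictly smaller pairs, and P0, P1 handle `0`
and swap the arguments. Hence every `p ‖ q` is eliminated by an induction on `p` with an
inner induction on `q`: in each case the recursive calls either shrink `p` (for any `q`) or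
keep `p` and shrink `q`. -/

namespace ES

variable {A : Type}

lemma deriv_of_mem {l r : Tm A} (h : (l, r) ∈ ES A) (σ : ℕ → Tm A) :
    Deriv (ES A) (tmSubst σ l) (tmSubst σ r) :=
  (Deriv.ax h).subst σ

lemma deriv_par_nil (x : Tm A) : Deriv (ES A) (.par x .nil) x :=
  deriv_of_mem (l := .par (.var 0) .nil) (r := .var 0) (by simp [ES]) fun _ => x

lemma deriv_par_comm (x y : Tm A) : Deriv (ES A) (.par x y) (.par y x) :=
  deriv_of_mem (l := .par (.var 0) (.var 1)) (r := .par (.var 1) (.var 0)) (by simp [ES])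
    fun n => [x, y].getD n .nil

lemma deriv_add_par_add (x y z w : Tm A) :
    Deriv (ES A) (.par (.add x y) (.add z w))
      (.add (.add (.add (.par x (.add z w)) (.par y (.add z w)))
        (.par (.add x y) z)) (.par (.add x y) w)) :=
  deriv_of_mem (l := .par (.add (.var 0) (.var 1)) (.add (.var 2) (.var 3)))
    (r := .add (.add (.add (.par (.var 0) (.add (.var 2) (.var 3)))
      (.par (.var 1) (.add (.var 2) (.var 3))))
      (.par (.add (.var 0) (.var 1)) (.var 2))) (.par (.add (.var 0) (.var 1)) (.var 3)))
    (by simp [ES]) fun n => [x, y, z, w].getD n .nil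

lemma deriv_pre_par_add (a : A) (x y z : Tm A) :
    Deriv (ES A) (.par (.pre a x) (.add y z))
      (.add (.add (.pre a (.par x (.add y z))) (.par (.pre a x) y)) (.par (.pre a x) z)) :=
  deriv_of_mem (l := .par (.pre a (.var 0)) (.add (.var 1) (.var 2)))
    (r := .add (.add (.pre a (.par (.var 0) (.add (.var 1) (.var 2))))
      (.par (.pre a (.var 0)) (.var 1))) (.par (.pre a (.var 0)) (.var 2)))
    (by simp [ES]) fun n => [x, y, z].getD n .nil

lemma deriv_pre_par_pre (a b : A) (x y : Tm A) :
    Deriv (ES A) (.par (.pre a x) (.pre b y))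
      (.add (.pre a (.par x (.pre b y))) (.pre b (.par (.pre a x) y))) :=
  deriv_of_mem (l := .par (.pre a (.var 0)) (.pre b (.var 1)))
    (r := .add (.pre a (.par (.var 0) (.pre b (.var 1)))) (.pre b (.par (.pre a (.var 0)) (.var 1))))
    (by simp [ES]) fun n => [x, y].getD n .nil

end ES

def ParEliminable {A : Type} (t : Tm A) : Prop :=
  ∃ r : Tm A, ClosedTm r ∧ ParFree r ∧ Deriv (ES A) t r

namespace ParEliminable

variable {A : Type} {t u x y z w : Tm A}

lemma of_closedTm_parFree (ht : ClosedTm t) (ht' : ParFree t) : ParEliminable t :=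
  ⟨t, ht, ht', .refl t⟩

lemma of_deriv (h : Deriv (ES A) t u) : ParEliminable u → ParEliminable t
  | ⟨r, hr, hr', hur⟩ => ⟨r, hr, hr', h.trans hur⟩

lemma pre (a : A) : ParEliminable t → ParEliminable (.pre a t)
  | ⟨r, hr, hr', htr⟩ => ⟨.pre a r, hr, hr', htr.pre a⟩

lemma add : ParEliminable t → ParEliminable u → ParEliminable (.add t u)
  | ⟨r, hr, hr', htr⟩, ⟨s, hs, hs', hus⟩ => ⟨.add r s, ⟨hr, hs⟩, ⟨hr', hs'⟩, htr.add hus⟩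

lemma par_nil (h : ParEliminable x) : ParEliminable (.par x .nil) :=
  of_deriv (ES.deriv_par_nil x) h

lemma par_comm (h : ParEliminable (.par y x)) : ParEliminable (.par x y) :=
  of_deriv (ES.deriv_par_comm x y) h

lemma add_par_add (hx : ParEliminable (.par x (.add z w))) (hy : ParEliminable (.par y (.add z w)))
    (hz : ParEliminable (.par (.add x y) z)) (hw : ParEliminable (.par (.add x y) w)) :
    ParEliminable (.par (.add x y) (.add z w)) :=
  of_deriv (ES.deriv_add_par_add x y z w) (((hx.add hy).add hz).add hw)

lemma pre_par_add (a : A) (hx : ParEliminable (.par x (.add y z)))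
    (hy : ParEliminable (.par (.pre a x) y)) (hz : ParEliminable (.par (.pre a x) z)) :
    ParEliminable (.par (.pre a x) (.add y z)) :=
  of_deriv (ES.deriv_pre_par_add a x y z) (((hx.pre a).add hy).add hz)

lemma pre_par_pre (a b : A) (hx : ParEliminable (.par x (.pre b y)))
    (hy : ParEliminable (.par (.pre a x) y)) :
    ParEliminable (.par (.pre a x) (.pre b y)) :=
  of_deriv (ES.deriv_pre_par_pre a b x y) ((hx.pre a).add (hy.pre b))

theorem par {p q : Tm A} (hp : ClosedTm p) (hp' : ParFree p) (hq : ClosedTm q) (hq' : ParFree q) :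
    ParEliminable (.par p q) := by
  induction p generalizing q with
  | var => exact hp.elim
  | par => exact hp'.elim
  | nil => exact par_comm (par_nil (of_closedTm_parFree hq hq'))
  | pre a x ihx =>
    induction q with
    | var => exact hq.elim
    | par => exact hq'.elim
    | nil => exact par_nil (of_closedTm_parFree hp hp')
    | pre b y ihy => exact pre_par_pre a b (ihx hp hp' hq hq') (ihy hq hq')
    | add y z ihy ihz =>
      exact pre_par_add a (ihx hp hp' hq hq') (ihy hq.1 hq'.1) (ihz hq.2 hq'.2)
  | add x y ihx ihy =>
    induction q with
    | var => exact hq.elim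
    | par => exact hq'.elim
    | nil => exact par_nil (of_closedTm_parFree hp hp')
    | pre b z ihz =>
      exact par_comm <| pre_par_add b (par_comm (ihz hq hq'))
        (par_comm (ihx hp.1 hp'.1 hq hq')) (par_comm (ihy hp.2 hp'.2 hq hq'))
    | add z w ihz ihw =>
      exact add_par_add (ihx hp.1 hp'.1 hq hq') (ihy hp.2 hp'.2 hq hq')
        (ihz hq.1 hq'.1) (ihw hq.2 hq'.2)

end ParEliminable

theorem ES_elimination_general {A : Type}
    (p q : Tm A) (hp : ClosedTm p ∧ ParFree p) (hq : ClosedTm q ∧ ParFree q) :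
    ∃ r : Tm A, ClosedTm r ∧ ParFree r ∧ Deriv (ES A) (Tm.par p q) r :=
  ParEliminable.par hp.1 hp.2 hq.1 hq.2

theorem ES_elimination {A : Type} [Fintype A] [Nonempty A]
    (p q : Tm A) (hp : ClosedTm p ∧ ParFree p) (hq : ClosedTm q ∧ ParFree q) :
    ∃ r : Tm A, ClosedTm r ∧ ParFree r ∧ Deriv (ES A) (Tm.par p q) r :=
  ES_elimination_general p q hp hq
end
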